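/- Let p be an irreducible stochastic matrix on a countable set S, let B ⊆ S be nonempty, and let b ∈ S∖B. Suppose there exist τ ∈ (0,1) and constants C_{ij} > 0 (i,j ∈ S) such that p^{(n),B∪{b}}_{ij} ≤ C_{ij}·τ^n for all i,j ∈ S and all n ≥ 1. Then there exist τ̂ ∈ (0,1) and constants Ĉ_{ij} > 0 such that p^{(n),B}_{ij} ≤ Ĉ_{ij}·τ̂^n for all i,j ∈ S and all n ≥ 1. (The inductive step in the proof of Proposition 4.4: removing one state from the taboo set preserves exponential decay of taboo probabilities.) -/

import Mathlib

open scoped Classical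

/-- Taboo probabilities: `tabooP p B n i j` is the probability of going from `i` to `j`
in `n` steps while all intermediate states avoid the taboo set `B`. -/
noncomputable def tabooP {S : Type*} (p : S → S → ℝ) (B : Set S) : ℕ → S → S → ℝ
  | 0 => fun i j => if i = j then 1 else 0
  | 1 => fun i j => p i j
  | n + 2 => fun i j => ∑' r : ↥Bᶜ, p i (r : S) * tabooP p B (n + 1) (r : S) j

/-- `n`-step transition probabilities. -/
noncomputable def nstep {S : Type*} (p : S → S → ℝ) : ℕ → S → S → ℝ :=
  tabooP p (∅ : Set S)

/-! Write `A = B ∪ {b}` and `P^B_n` for `tabooP p B n`. Splitting a path that avoids `B` at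
its first visit to `b` gives the first-entrance decomposition
`P^B_n(i,j) = P^A_n(i,j) + ∑_{0<k<n} P^A_k(i,b) P^B_{n-k}(b,j)`.
By irreducibility the chain can pass from `b` into `B` without returning to `b`, so the return
probability `∑ₖ P^A_k(b,b)` is `< 1`; since `P^A_k(b,b) ≤ C τ^k`, it stays `< 1` after weighting
by `t^{-k}` for some `t ∈ (τ, 1)` (dominated convergence). The renewal inequality for
`n ↦ P^B_n(b,j)` then gives decay at rate `t`, and the decomposition transfers it to every
starting point `i`. -/

open Finset Filter Topology

lemma summable_div_pow_succ {y : ℕ → ℝ} {c τ t : ℝ} (hy0 : ∀ n, 0 ≤ y n)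
    (hy : ∀ n, y n ≤ c * τ ^ (n + 1)) (hτ : 0 ≤ τ) (hτt : τ < t) :
    Summable fun n => y n / t ^ (n + 1) := by
  have ht : 0 < t := hτ.trans_lt hτt
  refine Summable.of_nonneg_of_le (fun n => by have := hy0 n; positivity) (fun n => ?_)
    ((summable_geometric_of_lt_one (by positivity) ((div_lt_one ht).mpr hτt)).mul_left
      (c * (τ / t)))
  calc y n / t ^ (n + 1) ≤ c * τ ^ (n + 1) / t ^ (n + 1) := by gcongr; exact hy n
    _ = c * (τ / t) * (τ / t) ^ n := by rw [mul_assoc, ← pow_succ', div_pow, mul_div_assoc]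

lemma exists_tsum_div_pow_succ_lt_one {y : ℕ → ℝ} {c τ : ℝ} (hτ0 : 0 ≤ τ) (hτ1 : τ < 1)
    (hy0 : ∀ n, 0 ≤ y n) (hy : ∀ n, y n ≤ c * τ ^ (n + 1)) (hlt : ∑' n, y n < 1) :
    ∃ t, τ < t ∧ t < 1 ∧ ∑' n, y n / t ^ (n + 1) < 1 := by
  obtain ⟨s, hτs, hs1⟩ := exists_between hτ1
  have hs0 : 0 < s := hτ0.trans_lt hτs
  have hlim : Tendsto (fun t => ∑' n, y n / t ^ (n + 1)) (𝓝[<] 1) (𝓝 (∑' n, y n)) := by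
    have h := tendsto_tsum_of_dominated_convergence (𝓕 := 𝓝[<] (1 : ℝ))
      (f := fun t n => y n / t ^ (n + 1)) (g := fun n => y n / 1 ^ (n + 1))
      (summable_div_pow_succ hy0 hy hτ0 hτs)
      (fun n => tendsto_const_nhds.div
        (((continuous_pow (n + 1)).tendsto 1).mono_left nhdsWithin_le_nhds) (by norm_num))
      (by
        filter_upwards [Ioo_mem_nhdsLT hs1] with t ht n
        have ht0 : 0 < t := hs0.trans ht.1
        rw [Real.norm_eq_abs, abs_of_nonneg (div_nonneg (hy0 n) (by positivity))]
        gcongr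
        · exact hy0 n
        · exact ht.1.le)
    simpa using h
  obtain ⟨t, ht, hst, ht1⟩ :=
    ((hlim.eventually (gt_mem_nhds hlt)).and (Ioo_mem_nhdsLT hs1)).exists
  exact ⟨t, hτs.trans hst, ht1, ht⟩

lemma sum_Ico_mul_le_mul_tsum {x u : ℕ → ℝ} {t K : ℝ} {n : ℕ} (ht : 0 < t) (hK : 0 ≤ K)
    (hx0 : ∀ k, 0 ≤ x k) (hs : Summable fun k => x (k + 1) / t ^ (k + 1))
    (hu : ∀ m, 1 ≤ m → m < n → u m ≤ K * t ^ m) :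
    ∑ k ∈ Ico 1 n, x k * u (n - k) ≤ K * t ^ n * ∑' k, x (k + 1) / t ^ (k + 1) := by
  calc ∑ k ∈ Ico 1 n, x k * u (n - k)
      ≤ ∑ k ∈ Ico 1 n, K * t ^ n * (x k / t ^ k) := by
        refine sum_le_sum fun k hk => ?_
        obtain ⟨hk1, hkn⟩ := mem_Ico.mp hk
        calc x k * u (n - k) ≤ x k * (K * t ^ (n - k)) :=
              mul_le_mul_of_nonneg_left (hu _ (by omega) (by omega)) (hx0 k)
          _ = K * t ^ n * (x k / t ^ k) := by
              rw [← pow_sub_mul_pow t hkn.le]; field_simp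
    _ = K * t ^ n * ∑ k ∈ range (n - 1), x (k + 1) / t ^ (k + 1) := by
        rw [← mul_sum, sum_Ico_eq_sum_range]; simp only [add_comm 1]
    _ ≤ K * t ^ n * ∑' k, x (k + 1) / t ^ (k + 1) := by
        gcongr
        exact hs.sum_le_tsum _ fun k _ => div_nonneg (hx0 _) (by positivity)

lemma le_mul_pow_of_le_add_sum_Ico {x u : ℕ → ℝ} {t c : ℝ} (ht : 0 < t) (hc : 0 ≤ c)
    (hx0 : ∀ k, 0 ≤ x k) (hs : Summable fun k => x (k + 1) / t ^ (k + 1))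
    (hρ : ∑' k, x (k + 1) / t ^ (k + 1) < 1)
    (hu : ∀ n, 1 ≤ n → u n ≤ c * t ^ n + ∑ k ∈ Ico 1 n, x k * u (n - k)) (n : ℕ) (hn : 1 ≤ n) :
    u n ≤ c / (1 - ∑' k, x (k + 1) / t ^ (k + 1)) * t ^ n := by
  set ρ := ∑' k, x (k + 1) / t ^ (k + 1)
  have hK : 0 ≤ c / (1 - ρ) := div_nonneg hc (by linarith)
  induction n using Nat.strong_induction_on with
  | _ n ih =>
    calc u n ≤ c * t ^ n + ∑ k ∈ Ico 1 n, x k * u (n - k) := hu n hn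
      _ ≤ c * t ^ n + c / (1 - ρ) * t ^ n * ρ := by
          gcongr
          exact sum_Ico_mul_le_mul_tsum ht hK hx0 hs fun m hm hmn => ih m hmn hm
      _ = c / (1 - ρ) * t ^ n := by field_simp [(sub_pos.mpr hρ).ne']; ring

section

variable {S : Type*} {p : S → S → ℝ}

lemma tabooP_one (B : Set S) (i j : S) : tabooP p B 1 i j = p i j := rfl

lemma tabooP_succ (B : Set S) {n : ℕ} (hn : 1 ≤ n) (i j : S) :
    tabooP p B (n + 1) i j = ∑' r : ↥Bᶜ, p i r * tabooP p B n r j := by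
  obtain ⟨m, rfl⟩ := Nat.exists_eq_add_of_le' hn
  rfl

section Stochastic

variable (hp0 : ∀ i j, 0 ≤ p i j) (hp1 : ∀ i, HasSum (p i) 1)
include hp0

lemma tabooP_nonneg (B : Set S) : ∀ n i j, 0 ≤ tabooP p B n i j
  | 0, i, j => by dsimp only [tabooP]; split_ifs <;> norm_num
  | 1, i, j => hp0 i j
  | n + 2, i, j => by
    rw [tabooP_succ B n.succ_pos]
    exact tsum_nonneg fun r => mul_nonneg (hp0 _ _) (tabooP_nonneg B (n + 1) _ _)

lemma exists_pos_of_tabooP_succ_pos {B : Set S} {n : ℕ} (hn : 1 ≤ n) {i j : S}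
    (h : 0 < tabooP p B (n + 1) i j) : ∃ r ∉ B, 0 < p i r ∧ 0 < tabooP p B n r j := by
  rw [tabooP_succ B hn] at h
  obtain ⟨r, hr⟩ : ∃ r : ↥Bᶜ, 0 < p i r * tabooP p B n r j := by
    by_contra! hcon
    exact h.not_ge (tsum_nonpos hcon)
  exact ⟨r, r.2, pos_of_mul_pos_left hr (tabooP_nonneg hp0 B n r j),
    pos_of_mul_pos_right hr (hp0 i r)⟩

include hp1

lemma summable_mul_of_le_one (i : S) {g : S → ℝ} (hg0 : ∀ r, 0 ≤ g r) (hg1 : ∀ r, g r ≤ 1) :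
    Summable fun r => p i r * g r :=
  (hp1 i).summable.of_nonneg_of_le (fun r => mul_nonneg (hp0 i r) (hg0 r))
    fun r => mul_le_of_le_one_right (hp0 i r) (hg1 r)

lemma tsum_subtype_mul_le (i : S) (T : Set S) {g : S → ℝ} (hg0 : ∀ r, 0 ≤ g r)
    (hg1 : ∀ r, g r ≤ 1) : ∑' r : T, p i r * g r ≤ ∑' r : T, p i r :=
  Summable.tsum_le_tsum (fun r => mul_le_of_le_one_right (hp0 i r) (hg1 r))
    ((summable_mul_of_le_one hp0 hp1 i hg0 hg1).subtype T) ((hp1 i).summable.subtype T)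

lemma tsum_subtype_le_one (i : S) (T : Set S) : ∑' r : T, p i r ≤ 1 :=
  ((hp1 i).summable.tsum_subtype_le _ T (hp0 i)).trans_eq (hp1 i).tsum_eq

lemma tabooP_le_one (B : Set S) : ∀ n i j, tabooP p B n i j ≤ 1
  | 0, i, j => by dsimp only [tabooP]; split_ifs <;> norm_num
  | 1, i, j => le_hasSum (hp1 i) j fun k _ => hp0 i k
  | n + 2, i, j => by
    rw [tabooP_succ B n.succ_pos]
    exact (tsum_subtype_mul_le hp0 hp1 i Bᶜ (fun r => tabooP_nonneg hp0 B _ r j)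
      fun r => tabooP_le_one B _ r j).trans (tsum_subtype_le_one hp0 hp1 i Bᶜ)

lemma summable_mul_tabooP (i : S) (A : Set S) (n : ℕ) (j : S) :
    Summable fun r => p i r * tabooP p A n r j :=
  summable_mul_of_le_one hp0 hp1 i (fun r => tabooP_nonneg hp0 A n r j)
    fun r => tabooP_le_one hp0 hp1 A n r j

lemma mul_tabooP_le_tabooP_succ {B : Set S} {r : S} (hr : r ∉ B) {n : ℕ} (hn : 1 ≤ n)
    (i j : S) : p i r * tabooP p B n r j ≤ tabooP p B (n + 1) i j := by
  rw [tabooP_succ B hn]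
  exact ((summable_mul_tabooP hp0 hp1 i B n j).subtype Bᶜ).le_tsum ⟨r, hr⟩
    fun r _ => mul_nonneg (hp0 _ _) (tabooP_nonneg hp0 B n _ j)

lemma tabooP_first_entrance {B : Set S} {b : S} (hb : b ∉ B) {n : ℕ} (hn : 1 ≤ n) (i j : S) :
    tabooP p B n i j = tabooP p (B ∪ {b}) n i j +
      ∑ k ∈ Ico 1 n, tabooP p (B ∪ {b}) k i b * tabooP p B (n - k) b j := by
  set A := B ∪ {b}
  induction n, hn using Nat.le_induction generalizing i with
  | base => simp [tabooP_one]
  | succ n hn ih =>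
    have hsplit : (Bᶜ : Set S) = {b} ∪ Aᶜ := by
      ext x; by_cases hx : x = b <;> simp [A, hx, hb]
    have hdisj : Disjoint ({b} : Set S) Aᶜ := by simp [A]
    have hs : ∀ (A' : Set S) (m : ℕ) (j' : S),
        Summable fun r : ↥Aᶜ => p i r * tabooP p A' m r j' :=
      fun A' m j' => (summable_mul_tabooP hp0 hp1 i A' m j').subtype Aᶜ
    have hB : tabooP p B (n + 1) i j = p i b * tabooP p B n b j +
        ∑' r : ↥Aᶜ, p i r * tabooP p B n r j := by
      rw [tabooP_succ B hn, hsplit, Summable.tsum_union_disjoint hdisj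
        ((summable_mul_tabooP hp0 hp1 i B n j).subtype _) (hs B n j), tsum_singleton b
        (fun r => p i r * tabooP p B n r j)]
    have hAc : ∑' r : ↥Aᶜ, p i r * tabooP p B n r j = tabooP p A (n + 1) i j +
        ∑ k ∈ Ico 1 n, tabooP p A (k + 1) i b * tabooP p B (n - k) b j := by
      simp_rw [ih, mul_add, mul_sum, ← mul_assoc]
      rw [Summable.tsum_add (hs A n j) (summable_sum fun k _ => (hs A k b).mul_right _),
        Summable.tsum_finsetSum fun k _ => (hs A k b).mul_right _, tabooP_succ A hn]
      congr 1
      refine sum_congr rfl fun k hk => ?_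
      rw [tsum_mul_right, tabooP_succ A (mem_Ico.mp hk).1]
    rw [hB, hAc, sum_eq_sum_Ico_succ_bot (by omega : 1 < n + 1), ← sum_Ico_add']
    simp only [tabooP_one, Nat.add_sub_add_right, Nat.add_sub_cancel]
    ring

lemma exists_pos_tabooP_of_pos_tabooP (D : Set S) {B : Set S} {e : S} (he : e ∈ B) {n : ℕ}
    (hn : 1 ≤ n) {i : S} (h : 0 < tabooP p D n i e) :
    ∃ m, 1 ≤ m ∧ ∃ e' ∈ B, 0 < tabooP p B m i e' := by
  induction n, hn using Nat.le_induction generalizing i with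
  | base => exact ⟨1, le_rfl, e, he, h⟩
  | succ n hn ih =>
    obtain ⟨r, -, hir, hr⟩ := exists_pos_of_tabooP_succ_pos hp0 hn h
    by_cases hrB : r ∈ B
    · exact ⟨1, le_rfl, r, hrB, hir⟩
    · obtain ⟨m, hm, e', he', h'⟩ := ih hr
      exact ⟨m + 1, by omega, e', he',
        (mul_pos hir h').trans_le (mul_tabooP_le_tabooP_succ hp0 hp1 hrB hm i e')⟩

lemma exists_pos_tabooP_union_of_pos {B : Set S} {b : S} (hb : b ∉ B) {e : S} {n : ℕ}
    (hn : 1 ≤ n) (h : 0 < tabooP p B n b e) : ∃ m, 1 ≤ m ∧ 0 < tabooP p (B ∪ {b}) m b e := by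
  induction n using Nat.strong_induction_on with
  | _ n ih =>
    rw [tabooP_first_entrance hp0 hp1 hb hn] at h
    by_cases hA : 0 < tabooP p (B ∪ {b}) n b e
    · exact ⟨n, hn, hA⟩
    · have hsum : ∑ k ∈ Ico 1 n, (0 : ℝ) <
          ∑ k ∈ Ico 1 n, tabooP p (B ∪ {b}) k b b * tabooP p B (n - k) b e := by
        rw [sum_const_zero]; linarith [not_lt.mp hA]
      obtain ⟨k, hk, hpos⟩ := exists_lt_of_sum_lt hsum
      obtain ⟨hk1, hkn⟩ := mem_Ico.mp hk
      exact ih (n - k) (by omega) (by omega)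
        (pos_of_mul_pos_right hpos (tabooP_nonneg hp0 _ k b b))

lemma sum_range_sum_tabooP_le_one {A : Set S} {F : Finset S} (hF : ↑F ⊆ A) (N : ℕ) (i : S) :
    ∑ n ∈ range N, ∑ a ∈ F, tabooP p A (n + 1) i a ≤ 1 := by
  induction N generalizing i with
  | zero => simp
  | succ N ih =>
    set v : S → ℝ := fun r => ∑ n ∈ range N, ∑ a ∈ F, tabooP p A (n + 1) r a
    have hs : ∀ n a, Summable fun r : ↥Aᶜ => p i r * tabooP p A (n + 1) r a :=
      fun n a => (summable_mul_tabooP hp0 hp1 i A (n + 1) a).subtype Aᶜ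
    have hstep : ∑ n ∈ range N, ∑ a ∈ F, tabooP p A (n + 1 + 1) i a =
        ∑' r : ↥Aᶜ, p i r * v r := by
      simp_rw [tabooP_succ A (Nat.le_add_left 1 _), v, mul_sum]
      rw [Summable.tsum_finsetSum fun n _ => summable_sum fun a _ => hs n a]
      exact sum_congr rfl fun n _ => (Summable.tsum_finsetSum fun a _ => hs n a).symm
    have hrow : ∑ a ∈ F, p i a + ∑' r : ↥Aᶜ, p i r ≤ 1 := by
      have hdisj : Disjoint (↑F : Set S) Aᶜ := Set.disjoint_compl_right_iff_subset.mpr hF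
      rw [← Finset.tsum_subtype' F (p i), ← Summable.tsum_union_disjoint hdisj
        ((hp1 i).summable.subtype _) ((hp1 i).summable.subtype _)]
      exact tsum_subtype_le_one hp0 hp1 i _
    calc ∑ n ∈ range (N + 1), ∑ a ∈ F, tabooP p A (n + 1) i a
        = ∑ a ∈ F, p i a + ∑' r : ↥Aᶜ, p i r * v r := by
          rw [sum_range_succ', hstep, add_comm]; rfl
      _ ≤ ∑ a ∈ F, p i a + ∑' r : ↥Aᶜ, p i r := by
          refine add_le_add_right (tsum_subtype_mul_le hp0 hp1 i Aᶜ (fun r => ?_) ih) _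
          exact sum_nonneg fun n _ => sum_nonneg fun a _ => tabooP_nonneg hp0 A _ r a
      _ ≤ 1 := hrow

lemma tsum_tabooP_return_lt_one (hirr : ∀ i j, ∃ n, 1 ≤ n ∧ 0 < nstep p n i j) {B : Set S}
    (hB : B.Nonempty) {b : S} (hb : b ∉ B) : ∑' n, tabooP p (B ∪ {b}) (n + 1) b b < 1 := by
  set A := B ∪ {b}
  obtain ⟨e₀, he₀⟩ := hB
  obtain ⟨n, hn, hn_pos⟩ := hirr b e₀
  obtain ⟨m, hm, e, he, hm_pos⟩ := exists_pos_tabooP_of_pos_tabooP hp0 hp1 ∅ he₀ hn hn_pos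
  obtain ⟨l, hl, hl_pos⟩ := exists_pos_tabooP_union_of_pos hp0 hp1 hb hm hm_pos
  have hbe : b ≠ e := fun h => hb (h ▸ he)
  have hnonneg : ∀ j n, 0 ≤ tabooP p A (n + 1) b j := fun j n => tabooP_nonneg hp0 A _ b j
  -- Returning to `b` and entering `B` at `e` are disjoint ways of first entering `A`.
  have hbound : ∀ N, ∑ n ∈ range N, tabooP p A (n + 1) b b ≤ 1 - tabooP p A l b e := by
    intro N
    have hpair := sum_range_sum_tabooP_le_one hp0 hp1 (A := A) (F := {b, e})
      (by simp [Set.insert_subset_iff, A, he]) (max N l) b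
    rw [sum_congr rfl fun n _ => sum_pair hbe, sum_add_distrib] at hpair
    have hle : ∑ n ∈ range N, tabooP p A (n + 1) b b ≤
        ∑ n ∈ range (max N l), tabooP p A (n + 1) b b :=
      sum_le_sum_of_subset_of_nonneg (range_subset_range.mpr (le_max_left N l))
        fun n _ _ => hnonneg b n
    have hge : tabooP p A l b e ≤ ∑ n ∈ range (max N l), tabooP p A (n + 1) b e := by
      have h := single_le_sum (fun n _ => hnonneg e n)
        (mem_range.mpr (show l - 1 < max N l by omega))
      rwa [Nat.sub_add_cancel hl] at h
    linarith
  have hsum := summable_of_sum_range_le (fun n => hnonneg b n) hbound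
  exact (hsum.tsum_le_of_sum_range_le hbound).trans_lt (by linarith)

lemma exists_tabooP_le_mul_pow {B : Set S} {b : S} (hb : b ∉ B) {t : ℝ} (ht : 0 < t)
    {C : S → S → ℝ} (hC : ∀ i j, 0 < C i j)
    (hdecay : ∀ i j n, 1 ≤ n → tabooP p (B ∪ {b}) n i j ≤ C i j * t ^ n)
    (hs : ∀ i, Summable fun k => tabooP p (B ∪ {b}) (k + 1) i b / t ^ (k + 1))
    (hρ : ∑' k, tabooP p (B ∪ {b}) (k + 1) b b / t ^ (k + 1) < 1) :
    ∃ Chat : S → S → ℝ, (∀ i j, 0 < Chat i j) ∧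
      ∀ i j n, 1 ≤ n → tabooP p B n i j ≤ Chat i j * t ^ n := by
  set A := B ∪ {b}
  have hA0 : ∀ n i j, 0 ≤ tabooP p A n i j := tabooP_nonneg hp0 A
  set K : S → ℝ := fun j => C b j / (1 - ∑' k, tabooP p A (k + 1) b b / t ^ (k + 1))
  have hK : ∀ j, 0 ≤ K j := fun j => div_nonneg (hC b j).le (by linarith)
  have hfrom_b : ∀ j n, 1 ≤ n → tabooP p B n b j ≤ K j * t ^ n := fun j =>
    le_mul_pow_of_le_add_sum_Ico ht (hC b j).le (fun k => hA0 k b b) (hs b) hρ fun n hn => by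
      rw [tabooP_first_entrance hp0 hp1 hb hn]
      exact add_le_add_left (hdecay b j n hn) _
  refine ⟨fun i j => C i j + K j * ∑' k, tabooP p A (k + 1) i b / t ^ (k + 1),
    fun i j => add_pos_of_pos_of_nonneg (hC i j) (mul_nonneg (hK j)
      (tsum_nonneg fun k => div_nonneg (hA0 _ i b) (by positivity))), fun i j n hn => ?_⟩
  calc tabooP p B n i j
      = tabooP p A n i j + ∑ k ∈ Ico 1 n, tabooP p A k i b * tabooP p B (n - k) b j :=
        tabooP_first_entrance hp0 hp1 hb hn i j
    _ ≤ C i j * t ^ n + K j * t ^ n * ∑' k, tabooP p A (k + 1) i b / t ^ (k + 1) :=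
        add_le_add (hdecay i j n hn) (sum_Ico_mul_le_mul_tsum ht (hK j) (fun k => hA0 k i b)
          (hs i) fun m hm _ => hfrom_b j m hm)
    _ = (C i j + K j * ∑' k, tabooP p A (k + 1) i b / t ^ (k + 1)) * t ^ n := by ring

end Stochastic

end

theorem stmt_5_general {S : Type*} (p : S → S → ℝ)
    (hp_nonneg : ∀ i j, 0 ≤ p i j)
    (hp_row : ∀ i, HasSum (fun j => p i j) 1)
    (hirr : ∀ i j, ∃ n, 1 ≤ n ∧ 0 < nstep p n i j)
    (B : Set S) (hBne : B.Nonempty) (b : S) (hb : b ∉ B)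
    (τ : ℝ) (hτ0 : 0 < τ) (hτ1 : τ < 1)
    (C : S → S → ℝ) (hC : ∀ i j, 0 < C i j)
    (hdecay : ∀ i j : S, ∀ n : ℕ, 1 ≤ n →
      tabooP p (B ∪ {b}) n i j ≤ C i j * τ ^ n) :
    ∃ τhat : ℝ, 0 < τhat ∧ τhat < 1 ∧ ∃ Chat : S → S → ℝ, (∀ i j, 0 < Chat i j) ∧
      ∀ i j : S, ∀ n : ℕ, 1 ≤ n → tabooP p B n i j ≤ Chat i j * τhat ^ n := by
  have hdecay' : ∀ i j n, tabooP p (B ∪ {b}) (n + 1) i j ≤ C i j * τ ^ (n + 1) :=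
    fun i j n => hdecay i j (n + 1) n.succ_pos
  obtain ⟨t, hτt, ht1, hρ⟩ := exists_tsum_div_pow_succ_lt_one hτ0.le hτ1
    (fun n => tabooP_nonneg hp_nonneg _ _ b b) (hdecay' b b)
    (tsum_tabooP_return_lt_one hp_nonneg hp_row hirr hBne hb)
  have ht0 : 0 < t := hτ0.trans hτt
  refine ⟨t, ht0, ht1, exists_tabooP_le_mul_pow hp_nonneg hp_row hb ht0 hC
    (fun i j n hn => (hdecay i j n hn).trans ?_)
    (fun i => summable_div_pow_succ (fun n => tabooP_nonneg hp_nonneg _ _ i b) (hdecay' i b)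
      hτ0.le hτt) hρ⟩
  exact mul_le_mul_of_nonneg_left (pow_le_pow_left₀ hτ0.le hτt.le n) (hC i j).le

/-- The inductive step in the proof of Proposition 4.4: removing one state from the taboo
set preserves exponential decay of taboo probabilities. -/
theorem stmt_5 {S : Type*} [Countable S] (p : S → S → ℝ)
    (hp_nonneg : ∀ i j, 0 ≤ p i j)
    (hp_row : ∀ i, HasSum (fun j => p i j) 1)
    (hirr : ∀ i j, ∃ n, 1 ≤ n ∧ 0 < nstep p n i j)
    (B : Set S) (hBne : B.Nonempty) (b : S) (hb : b ∉ B)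
    (τ : ℝ) (hτ0 : 0 < τ) (hτ1 : τ < 1)
    (C : S → S → ℝ) (hC : ∀ i j, 0 < C i j)
    (hdecay : ∀ i j : S, ∀ n : ℕ, 1 ≤ n →
      tabooP p (B ∪ {b}) n i j ≤ C i j * τ ^ n) :
    ∃ τhat : ℝ, 0 < τhat ∧ τhat < 1 ∧ ∃ Chat : S → S → ℝ, (∀ i j, 0 < Chat i j) ∧
      ∀ i j : S, ∀ n : ℕ, 1 ≤ n → tabooP p B n i j ≤ Chat i j * τhat ^ n :=
  stmt_5_general p hp_nonneg hp_row hirr B hBne b hb τ hτ0 hτ1 C hC hdecay
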